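/- Every normal probe interval model of a connected probe interval graph with n vertices and m edges has at most n columns, and there is a universal constant c such that every such model has at most c·(n+m+1) entries equal to 1. -/

import Mathlib

open Set

/-- A set of columns is consecutive in the column order. -/
def ConsecSet {k : ℕ} (A : Set (Fin k)) : Prop :=
  ∀ i j l : Fin k, i ≤ j → j ≤ l → i ∈ A → l ∈ A → j ∈ A

/-- Every row of the 0-1 matrix `M` has a nonempty consecutive block of 1's. -/
def RowsOK {V : Type} {k : ℕ} (M : V → Fin k → Prop) : Prop :=
  ∀ v : V, {j | M v j}.Nonempty ∧ ConsecSet {j | M v j}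

/-- The matrix `M` represents exactly the adjacencies of `G`, where `P` is the probe set:
two distinct vertices are adjacent iff some column has a 1 in both rows and at least
one of the two vertices is a probe. -/
def Represents {V : Type} {k : ℕ} (G : SimpleGraph V) (P : Set V)
    (M : V → Fin k → Prop) : Prop :=
  ∀ u v : V, u ≠ v → (G.Adj u v ↔ (u ∈ P ∨ v ∈ P) ∧ ∃ j, M u j ∧ M v j)

/-- `M` is a probe interval model of `G` with probe set `P`. -/
def IsPIModel {V : Type} {k : ℕ} (G : SimpleGraph V) (P : Set V)
    (M : V → Fin k → Prop) : Prop :=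
  RowsOK M ∧ Represents G P M

/-- The pairs of vertices that the matrix represents as adjacent. -/
def RepAdj {V : Type} {k : ℕ} (P : Set V) (M : V → Fin k → Prop) (u v : V) : Prop :=
  u ≠ v ∧ (u ∈ P ∨ v ∈ P) ∧ ∃ j, M u j ∧ M v j

/-- `c` is the left endpoint of row `v`: the first column where the row has a 1. -/
def IsLeftEnd {V : Type} {k : ℕ} (M : V → Fin k → Prop) (v : V) (c : Fin k) : Prop :=
  M v c ∧ ∀ j, M v j → c ≤ j

/-- `c` is the right endpoint of row `v`: the last column where the row has a 1. -/
def IsRightEnd {V : Type} {k : ℕ} (M : V → Fin k → Prop) (v : V) (c : Fin k) : Prop :=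
  M v c ∧ ∀ j, M v j → j ≤ c

/-- A proper left endpoint: the left endpoint of a row with a 1 in more than one column. -/
def IsProperLeftEnd {V : Type} {k : ℕ} (M : V → Fin k → Prop) (v : V) (c : Fin k) : Prop :=
  IsLeftEnd M v c ∧ ∃ j, M v j ∧ j ≠ c

/-- A proper right endpoint: the right endpoint of a row with a 1 in more than one column. -/
def IsProperRightEnd {V : Type} {k : ℕ} (M : V → Fin k → Prop) (v : V) (c : Fin k) : Prop :=
  IsRightEnd M v c ∧ ∃ j, M v j ∧ j ≠ c

/-- `M'` is obtained from `M` by a contraction of row `v`: the first or last 1 of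
row `v` is changed to a 0, resulting in a shorter (still nonempty) interval. -/
def Contraction {V : Type} {k : ℕ} (M M' : V → Fin k → Prop) (v : V) : Prop :=
  ∃ c : Fin k, (IsProperLeftEnd M v c ∨ IsProperRightEnd M v c) ∧
    ∀ u j, M' u j ↔ M u j ∧ ¬(u = v ∧ j = c)

/-- Row `v` is taut: every contraction of it changes the set of vertex pairs that
the matrix represents as adjacent. -/
def TautRow {V : Type} {k : ℕ} (P : Set V) (M : V → Fin k → Prop) (v : V) : Prop :=
  ∀ M' : V → Fin k → Prop, Contraction M M' v → RepAdj P M' ≠ RepAdj P M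

/-- Every row of the model is taut. -/
def Taut {V : Type} {k : ℕ} (P : Set V) (M : V → Fin k → Prop) : Prop :=
  ∀ v : V, TautRow P M v

/-- The matrix obtained from `M` by merging the consecutive columns `i` and `i + 1`
(replacing them by their entrywise OR). -/
def mergeCols {V : Type} {k : ℕ} (M : V → Fin k → Prop) (i : ℕ) :
    V → Fin (k - 1) → Prop := fun v j =>
  if h1 : j.val < i then M v ⟨j.val, by have := j.isLt; omega⟩
  else if h2 : j.val = i then
    M v ⟨i, by have := j.isLt; omega⟩ ∨ M v ⟨i + 1, by have := j.isLt; omega⟩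
  else M v ⟨j.val + 1, by have := j.isLt; omega⟩

/-- The consecutive columns `i` and `i + 1` of the model `M` of `G` can be merged:
replacing them by their entrywise OR again yields a probe interval model representing
the same adjacencies. -/
def CanMerge {V : Type} {k : ℕ} (G : SimpleGraph V) (P : Set V)
    (M : V → Fin k → Prop) (i : ℕ) : Prop :=
  i + 1 < k ∧ IsPIModel G P (mergeCols M i)

/-- No two consecutive columns of the model can be merged. -/
def MinimalModel {V : Type} {k : ℕ} (G : SimpleGraph V) (P : Set V)
    (M : V → Fin k → Prop) : Prop :=
  ∀ i : ℕ, ¬ CanMerge G P M i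

/-- A normal probe interval model: a probe interval model that is taut and minimal. -/
def IsNormalModel {V : Type} {k : ℕ} (G : SimpleGraph V) (P : Set V)
    (M : V → Fin k → Prop) : Prop :=
  IsPIModel G P M ∧ Taut P M ∧ MinimalModel G P M

/-- The vertex set of a column: the vertices whose rows have a 1 in that column. -/
def colVerts {V : Type} {k : ℕ} (M : V → Fin k → Prop) (j : Fin k) : Set V :=
  {v | M v j}

/-- The probe set of a column. -/
def probeSetCol {V : Type} {k : ℕ} (P : Set V) (M : V → Fin k → Prop)
    (j : Fin k) : Set V :=
  {v | v ∈ P ∧ M v j}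

/-- The probe set of the column with (natural number) index `n`, empty if out of range. -/
def probeSetAt {W : Type} {K : ℕ} (P : Set W) (M : W → Fin K → Prop) (n : ℕ) : Set W :=
  {v | v ∈ P ∧ ∃ hn : n < K, M v ⟨n, hn⟩}

/-- `G` is a probe interval graph with respect to the probe set `P`. -/
def IsPIGraph {V : Type} (G : SimpleGraph V) (P : Set V) : Prop :=
  ∃ (k : ℕ) (M : V → Fin k → Prop), IsPIModel G P M

/-- `x` is a simplicial non-probe: a non-probe whose neighborhood induces a
complete subgraph. -/
def SimpNonProbe {V : Type} (G : SimpleGraph V) (P : Set V) (x : V) : Prop :=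
  x ∉ P ∧ G.IsClique (G.neighborSet x)

/-- The set `N_S` of simplicial non-probes. -/
def setNS {V : Type} (G : SimpleGraph V) (P : Set V) : Set V :=
  {x | SimpNonProbe G P x}

/-- `K` is (the vertex set of) a maximal complete subgraph of `H`. -/
def IsMaxClique {W : Type} (H : SimpleGraph W) (K : Set W) : Prop :=
  H.IsClique K ∧ ∀ K' : Set W, H.IsClique K' → K ⊆ K' → K' = K

/-- `K` is (the vertex set of) a maximal complete subgraph of `G[P]`. -/
def IsMaxPClique {V : Type} (G : SimpleGraph V) (P : Set V) (K : Set V) : Prop :=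
  (K ⊆ P ∧ K.Pairwise G.Adj) ∧
    ∀ K' : Set V, K' ⊆ P → K'.Pairwise G.Adj → K ⊆ K' → K' = K

/-- A clique column: its vertex set contains a clique of `G[P]`. -/
def IsCliqueCol {V : Type} {k : ℕ} (G : SimpleGraph V) (P : Set V)
    (M : V → Fin k → Prop) (j : Fin k) : Prop :=
  ∃ K : Set V, IsMaxPClique G P K ∧ K ⊆ colVerts M j

/-- A left semi-clique column: it contains a proper right endpoint of a probe and a
proper left endpoint of a non-probe, but no left endpoint of a probe and no right
endpoint of a non-probe. -/
def IsLeftSemiCol {V : Type} {k : ℕ} (P : Set V) (M : V → Fin k → Prop)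
    (j : Fin k) : Prop :=
  (∃ p ∈ P, IsProperRightEnd M p j) ∧ (∃ x, x ∉ P ∧ IsProperLeftEnd M x j) ∧
    (∀ p ∈ P, ¬ IsLeftEnd M p j) ∧ (∀ x, x ∉ P → ¬ IsRightEnd M x j)

/-- A right semi-clique column (symmetric to a left semi-clique column). -/
def IsRightSemiCol {V : Type} {k : ℕ} (P : Set V) (M : V → Fin k → Prop)
    (j : Fin k) : Prop :=
  (∃ p ∈ P, IsProperLeftEnd M p j) ∧ (∃ x, x ∉ P ∧ IsProperRightEnd M x j) ∧
    (∀ p ∈ P, ¬ IsRightEnd M p j) ∧ (∀ x, x ∉ P → ¬ IsLeftEnd M x j)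

/-- A semi-clique column: a left or right semi-clique column. -/
def IsSemiCol {V : Type} {k : ℕ} (P : Set V) (M : V → Fin k → Prop)
    (j : Fin k) : Prop :=
  IsLeftSemiCol P M j ∨ IsRightSemiCol P M j

/-- A simplicial column: not a clique column, its vertex set contains a simplicial
non-probe, and it contains no endpoint of a non-simplicial non-probe. -/
def IsSimpCol {V : Type} {k : ℕ} (G : SimpleGraph V) (P : Set V)
    (M : V → Fin k → Prop) (j : Fin k) : Prop :=
  ¬ IsCliqueCol G P M j ∧ (∃ x, SimpNonProbe G P x ∧ M x j) ∧
    ∀ x, x ∉ P → ¬ SimpNonProbe G P x → ¬ IsLeftEnd M x j ∧ ¬ IsRightEnd M x j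

/-- The probe set of the induced subgraph `G - N_S` on `V \ N_S`. -/
def probesPS {V : Type} (G : SimpleGraph V) (P : Set V) : Set ↥((setNS G P)ᶜ) :=
  {v | (v : V) ∈ P}

/-- The graph `G**` on `V \ N_S`: its edges are those of `G - N_S` together with the
pairs `x y` of non-probes such that `N(x) ∩ N(y)` equals a clique of `G[P]` or
contains two nonadjacent vertices. -/
def Gss {V : Type} (G : SimpleGraph V) (P : Set V) : SimpleGraph ↥((setNS G P)ᶜ) :=
  SimpleGraph.fromRel (fun u v =>
    G.Adj (u : V) (v : V) ∨
      ((u : V) ∉ P ∧ (v : V) ∉ P ∧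
        ((∃ K : Set V, IsMaxPClique G P K ∧
            G.neighborSet (u : V) ∩ G.neighborSet (v : V) = K) ∨
          (∃ a b : V, a ∈ G.neighborSet (u : V) ∩ G.neighborSet (v : V) ∧
            b ∈ G.neighborSet (u : V) ∩ G.neighborSet (v : V) ∧
            a ≠ b ∧ ¬ G.Adj a b))))

/-- `M` is a consecutive-ones ordered clique matrix of `H`: it has one column per
maximal clique of `H`, with a 1 in row `v` and column `K` exactly when `v ∈ K`, and
the 1's in every row are consecutive. -/
def IsC1CliqueMatrix {W : Type} (H : SimpleGraph W) {k : ℕ}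
    (M : W → Fin k → Prop) : Prop :=
  (∃ f : Fin k → Set W, Function.Injective f ∧
      (∀ j, IsMaxClique H (f j)) ∧ (∀ K, IsMaxClique H K → ∃ j, f j = K) ∧
      (∀ v j, M v j ↔ v ∈ f j)) ∧
    ∀ v : W, ConsecSet {j | M v j}

/-- A 0-1 matrix (with rows indexed by `R`) has the consecutive-ones property. -/
def HasC1P {R : Type} {n : ℕ} (M : R → Fin n → Prop) : Prop :=
  ∃ σ : Equiv.Perm (Fin n), ∀ r, ConsecSet {j | M r (σ j)}

/-- Two sets properly overlap. -/
def ProperOverlap {α : Type} (A B : Set α) : Prop :=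
  (A ∩ B).Nonempty ∧ (A \ B).Nonempty ∧ (B \ A).Nonempty

/-!
If columns `a` and `a + 1` of a model cannot be merged, merging must create a new adjacency:
some row `u` ends at `a` and some row `w` starts at `a + 1`, and `u` or `w` is a probe. Hence
every column is the right end of a row, so there are at most `n` columns. An entry `(v, a)`
that is not the right end of row `v` is charged to the oriented edge `v → u` if `v` or `u` is a
probe (both rows contain `a`), and otherwise to `v → w` (both contain `a + 1`). The right end
of `u`, resp. the left end of `w`, recovers `a`, so the right ends and the two kinds of charges
account for at most `n + 4m` entries.
-/

section

variable {V : Type} {k : ℕ} {G : SimpleGraph V} {P : Set V} {M : V → Fin k → Prop}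

theorem IsLeftEnd.unique {v : V} {a b : Fin k} (ha : IsLeftEnd M v a) (hb : IsLeftEnd M v b) :
    a = b :=
  le_antisymm (ha.2 b hb.1) (hb.2 a ha.1)

theorem IsRightEnd.unique {v : V} {a b : Fin k} (ha : IsRightEnd M v a)
    (hb : IsRightEnd M v b) : a = b :=
  le_antisymm (hb.2 a ha.1) (ha.2 b hb.1)

theorem isRightEnd_isLeftEnd_of_disjoint {u w : V} {a b : Fin k}
    (hu : ConsecSet {j | M u j}) (hw : ConsecSet {j | M w j})
    (hdisj : ∀ c, ¬ (M u c ∧ M w c)) (hua : M u a) (hwb : M w b) (hab : (b : ℕ) = a + 1) :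
    IsRightEnd M u a ∧ IsLeftEnd M w b := by
  refine ⟨⟨hua, fun c hc => ?_⟩, ⟨hwb, fun c hc => ?_⟩⟩
  · by_contra hac
    have hbc : b ≤ c := Fin.le_def.2 (by rw [not_le, Fin.lt_def] at hac; omega)
    exact hdisj b ⟨hu a b c (Fin.le_def.2 (by omega)) hbc hua hc, hwb⟩
  · by_contra hcb
    have hca : c ≤ a := Fin.le_def.2 (by rw [not_le, Fin.lt_def] at hcb; omega)
    exact hdisj a ⟨hua, hw c a b hca (Fin.le_def.2 (by omega)) hc hwb⟩

/-- Merging columns `i` and `i + 1` sends column `c` of `M` to column `mergeIdx i c`. -/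
def mergeIdx (i c : ℕ) : ℕ := if c ≤ i then c else c - 1

theorem mergeIdx_mono {i c c' : ℕ} (h : c ≤ c') : mergeIdx i c ≤ mergeIdx i c' := by
  unfold mergeIdx; split_ifs <;> omega

theorem eq_of_mergeIdx_eq_of_lt {i c c' : ℕ} (h : mergeIdx i c = mergeIdx i c') (hlt : c < c') :
    c = i ∧ c' = i + 1 := by
  unfold mergeIdx at h; split_ifs at h <;> omega

theorem mergeIdx_lt {i c : ℕ} (hi : i + 1 < k) (hc : c < k) : mergeIdx i c < k - 1 := by
  unfold mergeIdx; split_ifs <;> omega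

theorem exists_mergeIdx_eq (i : ℕ) (j : Fin (k - 1)) : ∃ c : Fin k, mergeIdx i c = j := by
  by_cases hj : (j : ℕ) ≤ i
  · exact ⟨⟨j, by omega⟩, by simp [mergeIdx, hj]⟩
  · exact ⟨⟨j + 1, by omega⟩, by simp only [mergeIdx]; split_ifs <;> omega⟩

theorem mergeCols_iff {i : ℕ} {v : V} {j : Fin (k - 1)} :
    mergeCols M i v j ↔ ∃ c : Fin k, M v c ∧ mergeIdx i c = j := by
  have hj := j.isLt
  constructor
  · unfold mergeCols
    split_ifs with h1 h2
    · exact fun h => ⟨_, h, by simp [mergeIdx]; omega⟩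
    · rintro (h | h)
      · exact ⟨_, h, by simp [mergeIdx]; omega⟩
      · exact ⟨_, h, by simp [mergeIdx]; omega⟩
    · exact fun h => ⟨_, h, by simp [mergeIdx]; omega⟩
  · rintro ⟨c, hc, hcj⟩
    unfold mergeIdx at hcj
    unfold mergeCols
    split_ifs with h1 h2
    · convert hc using 2; split_ifs at hcj <;> omega
    · rcases Nat.lt_or_ge (c : ℕ) (i + 1) with hlt | hge
      · left; convert hc using 2; split_ifs at hcj <;> omega
      · right; convert hc using 2; split_ifs at hcj <;> omega
    · convert hc using 2; split_ifs at hcj <;> omega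

theorem exists_mergeCols_of_common {i : ℕ} (hi : i + 1 < k) {u v : V} {c : Fin k}
    (hu : M u c) (hv : M v c) : ∃ j, mergeCols M i u j ∧ mergeCols M i v j :=
  ⟨⟨mergeIdx i c, mergeIdx_lt hi c.isLt⟩, mergeCols_iff.2 ⟨c, hu, rfl⟩,
    mergeCols_iff.2 ⟨c, hv, rfl⟩⟩

theorem RowsOK.mergeCols (hM : RowsOK M) {i : ℕ} (hi : i + 1 < k) :
    RowsOK (mergeCols M i) := by
  intro v
  obtain ⟨⟨c, hc⟩, hcons⟩ := hM v
  refine ⟨(exists_mergeCols_of_common hi hc hc).imp fun j hj => hj.1, ?_⟩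
  intro j₁ j₂ j₃ h₁₂ h₂₃ hj₁ hj₃
  obtain ⟨c₁, hc₁, hcj₁⟩ := mergeCols_iff.1 hj₁
  obtain ⟨c₃, hc₃, hcj₃⟩ := mergeCols_iff.1 hj₃
  obtain ⟨c₂, hcj₂⟩ := exists_mergeIdx_eq i j₂
  refine mergeCols_iff.2 ?_
  rcases lt_or_ge c₂ c₁ with h₂₁ | h₁₂'
  · have := mergeIdx_mono (i := i) h₂₁.le
    exact ⟨c₁, hc₁, by rw [Fin.le_def] at h₁₂; omega⟩
  rcases lt_or_ge c₃ c₂ with h₃₂ | h₂₃'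
  · have := mergeIdx_mono (i := i) h₃₂.le
    exact ⟨c₃, hc₃, by rw [Fin.le_def] at h₂₃; omega⟩
  exact ⟨c₂, hcons c₁ c₂ c₃ h₁₂' h₂₃' hc₁ hc₃, hcj₂⟩

/-- Merging columns `a` and `a + 1` keeps the rows intervals and every adjacency, so in a
minimal model it must create a new one. -/
theorem MinimalModel.exists_separating_pair (hmin : MinimalModel G P M)
    (hM : IsPIModel G P M) {a b : Fin k} (hab : (b : ℕ) = a + 1) :
    ∃ u w, (u ∈ P ∨ w ∈ P) ∧ IsRightEnd M u a ∧ IsLeftEnd M w b := by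
  have hi : (a : ℕ) + 1 < k := hab ▸ b.isLt
  have hrep : ¬ Represents G P (mergeCols M a) := fun h =>
    hmin a ⟨hi, RowsOK.mergeCols hM.1 hi, h⟩
  simp only [Represents, not_forall] at hrep
  obtain ⟨u, w, huw, hiff⟩ := hrep
  have horig := hM.2 u w huw
  have hnew : (u ∈ P ∨ w ∈ P) ∧ (∃ j, mergeCols M a u j ∧ mergeCols M a w j) ∧
      ∀ c, ¬ (M u c ∧ M w c) := by
    by_cases hadj : G.Adj u w
    · obtain ⟨hp, c, hu, hw⟩ := horig.1 hadj
      exact absurd (iff_of_true hadj ⟨hp, exists_mergeCols_of_common hi hu hw⟩) hiff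
    · obtain ⟨hp, hmerged⟩ := not_not.1 fun h => hiff (iff_of_false hadj h)
      exact ⟨hp, hmerged, fun c hc => hadj (horig.2 ⟨hp, c, hc⟩)⟩
  obtain ⟨hp, ⟨j, hju, hjw⟩, hdisj⟩ := hnew
  obtain ⟨cu, hcu, hcuj⟩ := mergeCols_iff.1 hju
  obtain ⟨cw, hcw, hcwj⟩ := mergeCols_iff.1 hjw
  have hcj : mergeIdx a cu = mergeIdx a cw := hcuj.trans hcwj.symm
  rcases lt_trichotomy cu cw with hlt | rfl | hgt
  · obtain ⟨hcu', hcw'⟩ := eq_of_mergeIdx_eq_of_lt hcj hlt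
    obtain rfl : cu = a := Fin.ext hcu'
    obtain rfl : cw = b := Fin.ext (by omega)
    exact ⟨u, w, hp, isRightEnd_isLeftEnd_of_disjoint (hM.1 u).2 (hM.1 w).2 hdisj hcu hcw hab⟩
  · exact absurd ⟨hcu, hcw⟩ (hdisj cu)
  · obtain ⟨hcw', hcu'⟩ := eq_of_mergeIdx_eq_of_lt hcj.symm hgt
    obtain rfl : cw = a := Fin.ext hcw'
    obtain rfl : cu = b := Fin.ext (by omega)
    exact ⟨w, u, hp.symm, isRightEnd_isLeftEnd_of_disjoint (hM.1 w).2 (hM.1 u).2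
      (fun c hc => hdisj c hc.symm) hcw hcu hab⟩

theorem MinimalModel.exists_isRightEnd [Nonempty V] (hmin : MinimalModel G P M)
    (hM : IsPIModel G P M) (a : Fin k) : ∃ v, IsRightEnd M v a := by
  by_cases hlast : (a : ℕ) + 1 < k
  · obtain ⟨u, -, -, hu, -⟩ := hmin.exists_separating_pair hM (b := ⟨a + 1, hlast⟩) rfl
    exact ⟨u, hu⟩
  suffices ∃ v, M v a from this.imp fun v hv => ⟨hv, fun j _ => Fin.le_def.2 (by omega)⟩
  rcases Nat.eq_zero_or_pos a with ha | ha
  · obtain ⟨v⟩ := ‹Nonempty V›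
    obtain ⟨j, hj⟩ := (hM.1 v).1
    obtain rfl : j = a := Fin.ext (by omega)
    exact ⟨v, hj⟩
  · obtain ⟨-, w, -, -, hw⟩ :=
      hmin.exists_separating_pair hM (a := ⟨a - 1, by omega⟩) (b := a) (by dsimp only; omega)
    exact ⟨w, hw.1⟩

theorem MinimalModel.card_le [Fintype V] [Nonempty V] (hmin : MinimalModel G P M)
    (hM : IsPIModel G P M) : k ≤ Fintype.card V := by
  choose f hf using hmin.exists_isRightEnd hM
  simpa using Fintype.card_le_of_injective f fun a b hab => (hf a).unique (hab ▸ hf b)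

def ChargedTo (G : SimpleGraph V) (M : V → Fin k → Prop) (v : V) (a : Fin k) :
    V ⊕ G.Dart ⊕ G.Dart → Prop
  | .inl x => x = v ∧ IsRightEnd M v a
  | .inr (.inl d) => d.fst = v ∧ IsRightEnd M d.snd a
  | .inr (.inr d) => d.fst = v ∧ ∃ b : Fin k, (b : ℕ) = a + 1 ∧ IsLeftEnd M d.snd b

theorem ChargedTo.unique {v v' : V} {a a' : Fin k} {q : V ⊕ G.Dart ⊕ G.Dart}
    (h : ChargedTo G M v a q) (h' : ChargedTo G M v' a' q) : v = v' ∧ a = a' := by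
  rcases q with x | d | d
  · obtain ⟨rfl, hr⟩ := h
    obtain ⟨rfl, hr'⟩ := h'
    exact ⟨rfl, hr.unique hr'⟩
  · exact ⟨h.1.symm.trans h'.1, h.2.unique h'.2⟩
  · obtain ⟨hv, b, hb, hlb⟩ := h
    obtain ⟨hv', b', hb', hlb'⟩ := h'
    have := congrArg Fin.val (hlb.unique hlb')
    exact ⟨hv.symm.trans hv', Fin.ext (by omega)⟩

theorem MinimalModel.exists_chargedTo (hmin : MinimalModel G P M) (hM : IsPIModel G P M)
    {v : V} {a : Fin k} (hva : M v a) : ∃ q, ChargedTo G M v a q := by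
  by_cases hr : IsRightEnd M v a
  · exact ⟨.inl v, rfl, hr⟩
  obtain ⟨c, hvc, hac⟩ : ∃ c, M v c ∧ a < c := by simpa [IsRightEnd, hva] using hr
  rw [Fin.lt_def] at hac
  obtain ⟨b, hab⟩ : ∃ b : Fin k, (b : ℕ) = a + 1 := ⟨⟨a + 1, by omega⟩, rfl⟩
  have hvb : M v b :=
    (hM.1 v).2 a b c (Fin.le_def.2 (by omega)) (Fin.le_def.2 (by omega)) hva hvc
  obtain ⟨u, w, hp, hu, hw⟩ := hmin.exists_separating_pair hM hab
  by_cases hvu : v ∈ P ∨ u ∈ P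
  · have hne : v ≠ u := by
      rintro rfl
      have := Fin.le_def.1 (hu.2 b hvb)
      omega
    exact ⟨.inr (.inl ⟨(v, u), (hM.2 v u hne).2 ⟨hvu, a, hva, hu.1⟩⟩), rfl, hu⟩
  · have hwP : w ∈ P := by tauto
    have hne : v ≠ w := by
      rintro rfl
      have := Fin.le_def.1 (hw.2 a hva)
      omega
    exact ⟨.inr (.inr ⟨(v, w), (hM.2 v w hne).2 ⟨Or.inr hwP, b, hvb, hw.1⟩⟩),
      rfl, b, hab, hw⟩

theorem MinimalModel.ncard_entries_le [Fintype V] (hmin : MinimalModel G P M)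
    (hM : IsPIModel G P M) :
    {p : V × Fin k | M p.1 p.2}.ncard ≤ Fintype.card V + 4 * G.edgeSet.ncard := by
  classical
  choose f hf using fun p : {p : V × Fin k | M p.1 p.2} => hmin.exists_chargedTo hM p.2
  have hinj : Function.Injective f := fun p p' h => by
    obtain ⟨hv, ha⟩ := (hf p).unique (h ▸ hf p')
    exact Subtype.ext (Prod.ext hv ha)
  calc {p : V × Fin k | M p.1 p.2}.ncard
      ≤ Nat.card (V ⊕ G.Dart ⊕ G.Dart) := Nat.card_le_card_of_injective f hinj
    _ = Fintype.card V + 4 * G.edgeSet.ncard := by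
      rw [← G.coe_edgeFinset, Set.ncard_coe_finset, Nat.card_eq_fintype_card,
        Fintype.card_sum, Fintype.card_sum, G.dart_card_eq_twice_card_edges]
      ring

end

/-- Every normal probe interval model of a connected probe interval graph
with `n` vertices and `m` edges has at most `n` columns, and there is a universal
constant `c` such that every such model has at most `c * (n + m + 1)` entries equal to 1. -/
theorem stmt8 :
    ∃ c : ℕ, ∀ (V : Type) [Fintype V] (G : SimpleGraph V) (P : Set V),
      (∀ u v : V, u ∉ P → v ∉ P → ¬ G.Adj u v) → G.Connected →
      ∀ (k : ℕ) (M : V → Fin k → Prop), IsNormalModel G P M →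
        k ≤ Fintype.card V ∧
        {p : V × Fin k | M p.1 p.2}.ncard ≤
          c * (Fintype.card V + G.edgeSet.ncard + 1) := by
  refine ⟨4, fun V _ G P _ hconn k M ⟨hM, _, hmin⟩ => ?_⟩
  have := hconn.nonempty
  refine ⟨hmin.card_le hM, ?_⟩
  have := hmin.ncard_entries_le hM
  omega
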